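/- Let f : ℝⁿ × ℝᵖ → ℝⁿ be continuously differentiable, and define the reachable workspace W = { α ∈ ℝᵖ | ∃ χ ∈ ℝⁿ, f(χ, α) = 0 }. If α ∈ W lies on the topological frontier of W, then for every χ ∈ ℝⁿ with f(χ, α) = 0 there exists ζ ∈ ℝⁿ with ‖ζ‖ = 1 and D_χ f(χ, α)ᵀ·ζ = 0; that is, every point of ∂W ∩ W corresponds to a singular configuration of the mechanism satisfying the extended system f(χ,α) = 0, f_χᵀ(χ,α)·ζ = 0, ζᵀζ = 1. -/

import Mathlib

/-!
If the partial Jacobian `D_χ f(χ, α)` were invertible, the implicit function theorem would solve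
`f(x, a) = 0` for every `a` near `α`, putting `α` in the interior of `W`. So its determinant, which
is that of its transpose, vanishes, and the transpose has a kernel vector that can be normalised.
-/

open Matrix

open Filter Topology in
theorem ContDiffAt.eventually_exists_apply_eq_of_isInvertible
    {𝕜 : Type*} [RCLike 𝕜]
    {E : Type*} [NormedAddCommGroup E] [NormedSpace 𝕜 E] [CompleteSpace E]
    {P : Type*} [NormedAddCommGroup P] [NormedSpace 𝕜 P] [CompleteSpace P]
    {F : Type*} [NormedAddCommGroup F] [NormedSpace 𝕜 F] [CompleteSpace F]
    {f : E × P → F} {u : E × P} {n : WithTop ℕ∞} (hf : ContDiffAt 𝕜 n f u) (hn : n ≠ 0)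
    (hinv : (fderiv 𝕜 (fun x => f (x, u.2)) u.1).IsInvertible) :
    ∀ᶠ a in 𝓝 u.2, ∃ x, f (x, a) = f u := by
  -- `ContDiffAt.implicitFunction` solves for the second coordinate, hence the swap.
  set g : P × E → F := fun v => f v.swap
  have hg : ContDiffAt 𝕜 n g u.swap := hf.comp u.swap (contDiffAt_snd.prodMk contDiffAt_fst)
  have hpartial : fderiv 𝕜 g u.swap ∘L .inr 𝕜 P E = fderiv 𝕜 (fun x => f (x, u.2)) u.1 :=
    ((hg.differentiableAt hn).hasFDerivAt.comp u.1 (hasFDerivAt_prodMk_right u.2 u.1)).fderiv.symm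
  filter_upwards [hg.eventually_apply_implicitFunction hn (hpartial ▸ hinv)] with a ha
  exact ⟨_, ha⟩

theorem ContinuousLinearMap.isInvertible_of_det_ne_zero
    {𝕜 : Type*} [NontriviallyNormedField 𝕜] [CompleteSpace 𝕜]
    {E : Type*} [NormedAddCommGroup E] [NormedSpace 𝕜 E] [FiniteDimensional 𝕜 E]
    {f : E →L[𝕜] E} (hf : f.det ≠ 0) : f.IsInvertible :=
  ⟨f.toContinuousLinearEquivOfDetNeZero hf, by ext; simp⟩

theorem Matrix.exists_dotProduct_self_eq_one_mulVec_eq_zero {ι : Type*} [Fintype ι]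
    [DecidableEq ι] {M : Matrix ι ι ℝ} (hM : M.det = 0) :
    ∃ ζ : ι → ℝ, ζ ⬝ᵥ ζ = 1 ∧ M *ᵥ ζ = 0 := by
  obtain ⟨v, hv, hMv⟩ := exists_mulVec_eq_zero_iff.mpr hM
  have hpos : 0 < v ⬝ᵥ v := lt_of_le_of_ne (Finset.sum_nonneg fun i _ => mul_self_nonneg (v i))
    (Ne.symm (dotProduct_self_eq_zero.not.mpr hv))
  refine ⟨(√(v ⬝ᵥ v))⁻¹ • v, ?_, by rw [mulVec_smul, hMv, smul_zero]⟩
  rw [smul_dotProduct, dotProduct_smul, smul_eq_mul, smul_eq_mul, ← mul_assoc, ← mul_inv,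
    Real.mul_self_sqrt hpos.le, inv_mul_cancel₀ hpos.ne']

theorem frontier_workspace_is_singular_general
    (n p : ℕ) (f : (Fin n → ℝ) × (Fin p → ℝ) → Fin n → ℝ)
    (hf : ContDiff ℝ 1 f)
    (W : Set (Fin p → ℝ))
    (hW : W = {α : Fin p → ℝ | ∃ χ : Fin n → ℝ, f (χ, α) = 0})
    (α : Fin p → ℝ) (hfr : α ∈ frontier W) :
    ∀ χ : Fin n → ℝ, f (χ, α) = 0 →
      ∃ ζ : Fin n → ℝ, ζ ⬝ᵥ ζ = 1 ∧
        (LinearMap.toMatrix'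
            ((fderiv ℝ (fun x => f (x, α)) χ).toLinearMap))ᵀ.mulVec ζ = 0 := by
  intro χ hχ
  set J := fderiv ℝ (fun x => f (x, α)) χ
  refine exists_dotProduct_self_eq_one_mulVec_eq_zero ?_
  rw [det_transpose, LinearMap.det_toMatrix']
  by_contra hdet
  have hsolvable : ∀ᶠ a in nhds α, ∃ x, f (x, a) = f (χ, α) :=
    hf.contDiffAt.eventually_exists_apply_eq_of_isInvertible one_ne_zero
      (ContinuousLinearMap.isInvertible_of_det_ne_zero (f := J) hdet)
  have hinterior : α ∈ interior W := by
    rw [mem_interior_iff_mem_nhds, hW]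
    filter_upwards [hsolvable] with a ⟨x, hx⟩
    exact ⟨x, hx.trans hχ⟩
  exact hfr.2 hinterior

/-- Workspace boundaries are singular configurations: if `α` belongs to the
reachable workspace `W = {α | ∃ χ, f(χ, α) = 0}` and lies on its topological
frontier, then for every `χ` with `f(χ, α) = 0` there is a unit vector `ζ`
(`ζᵀ ζ = 1`) in the kernel of the transposed partial Jacobian:
`D_χ f(χ, α)ᵀ ζ = 0`, i.e. `(χ, α, ζ)` solves the extended system
`f(χ,α) = 0`, `f_χᵀ ζ = 0`, `ζᵀ ζ = 1`. -/
theorem frontier_workspace_is_singular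
    (n p : ℕ) (f : (Fin n → ℝ) × (Fin p → ℝ) → Fin n → ℝ)
    (hf : ContDiff ℝ 1 f)
    (W : Set (Fin p → ℝ))
    (hW : W = {α : Fin p → ℝ | ∃ χ : Fin n → ℝ, f (χ, α) = 0})
    (α : Fin p → ℝ) (hα : α ∈ W) (hfr : α ∈ frontier W) :
    ∀ χ : Fin n → ℝ, f (χ, α) = 0 →
      ∃ ζ : Fin n → ℝ, ζ ⬝ᵥ ζ = 1 ∧
        (LinearMap.toMatrix'
            ((fderiv ℝ (fun x => f (x, α)) χ).toLinearMap))ᵀ.mulVec ζ = 0 :=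
  frontier_workspace_is_singular_general n p f hf W hW α hfr
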